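/- A term of the λ⊥-calculus has at least one right inverse if and only if it reduces to a head normal form of the shape λz.zM₁…Mₘ. -/

import Mathlib

/-!
If `λz.M(Rz)` converts to `λz.z`, then, since `λz.z` is normal, the body `M(Rz)` reduces to `z`,
and by a standardisation argument it does so by head reduction. Head-reducing `M(Rz)` to a
variable forces `M` to reduce to an abstraction `λx.C` and `C[x := Rz]` to head-reduce to `z`. As
the argument `Rz` is neither an abstraction nor `⊥`, every head step of `C[x := Rz]` comes from a
head step of `C` until the head of `C` is `x` itself; and `C`, in which `z` does not occur, cannot
reach `z`. Hence `C →* x M₁ … Mₘ`. Conversely, `λt x₁ … xₘ. t` is a right inverse of `λz.zM₁…Mₘ`.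
-/

/-- Terms of the λ⊥-calculus (de Bruijn indices). -/
inductive Tm : Type
  | var : ℕ → Tm
  | bot : Tm
  | lam : Tm → Tm
  | app : Tm → Tm → Tm
  deriving DecidableEq

namespace Tm

/-- Lift (shift by one) all de Bruijn indices ≥ k. -/
def lift : Tm → ℕ → Tm
  | var n, k => if n < k then var n else var (n+1)
  | bot, _ => bot
  | lam M, k => lam (lift M (k+1))
  | app M N, k => app (lift M k) (lift N k)

/-- Capture-avoiding substitution of N for variable k. -/
def subst : Tm → ℕ → Tm → Tm
  | var n, k, N => if n < k then var n else if n = k then N else var (n-1)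
  | bot, _, _ => bot
  | lam M, k, N => lam (subst M (k+1) (lift N 0))
  | app M P, k, N => app (subst M k N) (subst P k N)

/-- One-step β⊥-reduction (compatible closure). -/
inductive Step : Tm → Tm → Prop
  | beta (M N : Tm) : Step (app (lam M) N) (subst M 0 N)
  | botApp (N : Tm) : Step (app bot N) bot
  | botLam : Step (lam bot) bot
  | appL {M M'} (N) : Step M M' → Step (app M N) (app M' N)
  | appR (M) {N N'} : Step N N' → Step (app M N) (app M N')
  | lamC {M M'} : Step M M' → Step (lam M) (lam M')

/-- Multi-step reduction. -/
def Red : Tm → Tm → Prop := Relation.ReflTransGen Step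

/-- β⊥-conversion: M = N iff they have a common reduct. -/
def Conv (M N : Tm) : Prop := ∃ P, Red M P ∧ Red N P

/-- The identity combinator I = λx.x. -/
def iTm : Tm := lam (var 0)

/-- Composition M ∘ N = λz.M(Nz). -/
def comp (M N : Tm) : Tm := lam (app (lift M 0) (app (lift N 0) (var 0)))

/-- Apply M to a list of arguments. -/
def applist (M : Tm) (Ms : List Tm) : Tm := Ms.foldl app M

/-- Iterated λ-abstraction. -/
def iterLam : ℕ → Tm → Tm
  | 0, M => M
  | n+1, M => lam (iterLam n M)

/-- The selector λt x₁ … xₘ. t  (a simple right inverse). -/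
def sel (m : ℕ) : Tm := iterLam (m+1) (var m)

/-- Number of initial λ-abstractions of a term. -/
def leadLams : Tm → ℕ
  | lam M => leadLams M + 1
  | _ => 0

end Tm

mutual
/-- Strict intersection types μ ::= φ | ω | σ → μ. -/
inductive STy : Type
  | tvar : ℕ → STy
  | omega : STy
  | arrow : ITy → STy → STy
/-- Intersections σ ::= μ | σ ∧ σ. -/
inductive ITy : Type
  | strict : STy → ITy
  | inter : ITy → ITy → ITy
end

/-- The subtyping preorder on (strict) intersection types. -/
inductive SubTy : ITy → ITy → Prop
  | refl (σ) : SubTy σ σ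
  | trans {σ τ ρ} : SubTy σ τ → SubTy τ ρ → SubTy σ ρ
  | toOmega (σ) : SubTy σ (.strict .omega)
  | omegaArr : SubTy (.strict .omega) (.strict (.arrow (.strict .omega) .omega))
  | interL (σ τ) : SubTy (.inter σ τ) σ
  | interR (σ τ) : SubTy (.inter σ τ) τ
  | interMono {σ₁ σ₂ τ₁ τ₂} : SubTy σ₁ τ₁ → SubTy σ₂ τ₂ → SubTy (.inter σ₁ σ₂) (.inter τ₁ τ₂)
  | arrow {σ τ : ITy} {μ ν : STy} : SubTy τ σ → SubTy (.strict μ) (.strict ν) →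
      SubTy (.strict (.arrow σ μ)) (.strict (.arrow τ ν))

/-- σ ∼ τ : mutual subtyping. -/
def EqvTy (σ τ : ITy) : Prop := SubTy σ τ ∧ SubTy τ σ

/-- μ is a conjunct (component) of the intersection σ. -/
inductive IsComp : STy → ITy → Prop
  | strict (μ) : IsComp μ (.strict μ)
  | left {μ σ} (τ) : IsComp μ σ → IsComp μ (.inter σ τ)
  | right {μ τ} (σ) : IsComp μ τ → IsComp μ (.inter σ τ)

/-- The essential intersection type assignment system (contexts are de Bruijn lists). -/
inductive Der : List ITy → Tm → STy → Prop
  | var {Γ n σ μ} : Γ[n]? = some σ → IsComp μ σ → Der Γ (.var n) μ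
  | omega (Γ M) : Der Γ M .omega
  | sub {Γ M μ ν} : Der Γ M μ → SubTy (.strict μ) (.strict ν) → Der Γ M ν
  | lam {Γ M σ μ} : Der (σ :: Γ) M μ → Der Γ (.lam M) (.arrow σ μ)
  | app {Γ M N σ μ} : Der Γ M (.arrow σ μ) → (∀ ν, IsComp ν σ → Der Γ N ν) →
      Der Γ (.app M N) μ

/-- A strict type is inhabited if some closed term has it. -/
def InhabS (μ : STy) : Prop := ∃ M, Der [] M μ

/-- An intersection is inhabited if a single closed term has all its conjuncts. -/
def InhabI (σ : ITy) : Prop := ∃ M, ∀ μ, IsComp μ σ → Der [] M μ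

/-- σ → ρ is inhabited: one term inhabits σ → μ for every conjunct μ of ρ. -/
def InhabArrow (σ ρ : ITy) : Prop := ∃ M, ∀ μ, IsComp μ ρ → Der [] M (.arrow σ μ)

/-- ρ₁ → … → ρₘ → μ. -/
def arrows (l : List ITy) (μ : STy) : STy := l.foldr .arrow μ

/-- μ ◁ ν : μ is a retract of ν. -/
def Retract (μ ν : STy) : Prop :=
  ∃ L R, Der [] L (.arrow (.strict ν) μ) ∧ Der [] R (.arrow (.strict μ) ν) ∧
    Tm.Conv (Tm.comp L R) Tm.iTm

open Relation

namespace Tm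

section Substitution

theorem lift_lift (M : Tm) {i j : ℕ} (h : i ≤ j) :
    lift (lift M i) (j + 1) = lift (lift M j) i := by
  induction M generalizing i j with
  | var n => simp only [lift]; split_ifs <;> simp only [lift] <;> split_ifs <;> first | rfl | omega
  | bot => rfl
  | lam M ih => simp only [lift, ih (Nat.succ_le_succ h)]
  | app M N ihM ihN => simp only [lift, ihM h, ihN h]

theorem lift_subst_of_le (M N : Tm) {i k : ℕ} (h : i ≤ k) :
    lift (subst M k N) i = subst (lift M i) (k + 1) (lift N i) := by
  induction M generalizing i k N with
  | var n =>
    simp only [subst, lift]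
    split_ifs <;> simp only [subst, lift] <;> split_ifs <;> first | rfl | omega | (congr 1; omega)
  | bot => rfl
  | lam M ih => simp only [subst, lift, ih _ (Nat.succ_le_succ h), lift_lift N (Nat.zero_le i)]
  | app M P ihM ihP => simp only [subst, lift, ihM _ h, ihP _ h]

theorem lift_subst_of_ge (M N : Tm) {j k : ℕ} (h : j ≤ k) :
    lift (subst M j N) k = subst (lift M (k + 1)) j (lift N k) := by
  induction M generalizing j k N with
  | var n =>
    simp only [subst, lift]
    split_ifs <;> simp only [subst, lift] <;> split_ifs <;> first | rfl | omega | (congr 1; omega)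
  | bot => rfl
  | lam M ih => simp only [subst, lift, ih _ (Nat.succ_le_succ h), lift_lift N (Nat.zero_le k)]
  | app M P ihM ihP => simp only [subst, lift, ihM _ h, ihP _ h]

@[simp]
theorem subst_lift (M N : Tm) (k : ℕ) : subst (lift M k) k N = M := by
  induction M generalizing k N with
  | var n =>
    simp only [lift]
    split_ifs <;> simp only [subst] <;> split_ifs <;> first | rfl | omega
  | bot => rfl
  | lam M ih => simp only [lift, subst, ih]
  | app M P ihM ihP => simp only [lift, subst, ihM, ihP]

theorem subst_subst (M B N : Tm) {j k : ℕ} (h : j ≤ k) :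
    subst (subst M j B) k N = subst (subst M (k + 1) (lift N j)) j (subst B k N) := by
  induction M generalizing j k B N with
  | var n =>
    simp only [subst]
    split_ifs <;> simp only [subst, subst_lift] <;> (try split_ifs) <;> first | rfl | omega
  | bot => rfl
  | lam M ih =>
    simp only [subst, ih _ _ (Nat.succ_le_succ h), lift_lift N (Nat.zero_le j),
      lift_subst_of_le B N (Nat.zero_le k)]
  | app M P ihM ihP => simp only [subst, ihM _ _ h, ihP _ _ h]

end Substitution

section Inversion

theorem lift_eq_bot {M : Tm} {k : ℕ} (h : lift M k = bot) : M = bot := by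
  cases M with
  | bot => rfl
  | var n => simp only [lift] at h; split_ifs at h
  | lam | app => cases h

theorem lift_eq_lam {M P : Tm} {k : ℕ} (h : lift M k = lam P) :
    ∃ P₀, M = lam P₀ ∧ P = lift P₀ (k + 1) := by
  cases M with
  | lam P₀ => exact ⟨P₀, rfl, (lam.inj h).symm⟩
  | var n => simp only [lift] at h; split_ifs at h
  | bot | app => cases h

theorem lift_eq_app {M P Q : Tm} {k : ℕ} (h : lift M k = app P Q) :
    ∃ P₀ Q₀, M = app P₀ Q₀ ∧ P = lift P₀ k ∧ Q = lift Q₀ k := by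
  cases M with
  | app P₀ Q₀ => exact ⟨P₀, Q₀, rfl, (app.inj h).1.symm, (app.inj h).2.symm⟩
  | var n => simp only [lift] at h; split_ifs at h
  | bot | lam => cases h

theorem lift_ne_var_self (M : Tm) (k : ℕ) : lift M k ≠ var k := by
  cases M <;> simp only [lift, ne_eq, reduceCtorEq, not_false_eq_true]
  split_ifs <;> simp only [var.injEq] <;> omega

theorem subst_eq_bot {C B : Tm} {k : ℕ} (h : subst C k B = bot) :
    C = bot ∨ (C = var k ∧ B = bot) := by
  cases C <;> simp only [subst] at h
  case var n => split_ifs at h; all_goals simp_all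
  case bot => exact .inl rfl
  all_goals cases h

theorem subst_eq_lam {C B E : Tm} {k : ℕ} (h : subst C k B = lam E) :
    (∃ E₀, C = lam E₀ ∧ E = subst E₀ (k + 1) (lift B 0)) ∨ (C = var k ∧ B = lam E) := by
  cases C <;> simp only [subst] at h
  case var n => split_ifs at h; all_goals simp_all
  case lam E₀ => exact .inl ⟨E₀, rfl, (lam.inj h).symm⟩
  all_goals cases h

end Inversion

section Reduction

theorem Red.app {M M' N N' : Tm} (hM : Red M M') (hN : Red N N') : Red (app M N) (app M' N') :=
  (ReflTransGen.lift (Tm.app · N) (fun _ _ s => Step.appL N s) _ _ hM).trans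
    (ReflTransGen.lift (Tm.app M' ·) (fun _ _ s => Step.appR M' s) _ _ hN)

theorem Red.lam {M M' : Tm} (h : Red M M') : Red (lam M) (lam M') :=
  ReflTransGen.lift Tm.lam (fun _ _ s => Step.lamC s) _ _ h

theorem Red.applist {M M' : Tm} (h : Red M M') (Ns : List Tm) :
    Red (applist M Ns) (applist M' Ns) := by
  induction Ns generalizing M M' with
  | nil => exact h
  | cons N Ns ih => exact ih (h.app .refl)

theorem Step.lift {M M' : Tm} (h : Step M M') (k : ℕ) : Step (Tm.lift M k) (Tm.lift M' k) := by
  induction h generalizing k with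
  | beta M N => rw [lift_subst_of_ge M N (Nat.zero_le k)]; exact .beta _ _
  | botApp N => exact .botApp _
  | botLam => exact .botLam
  | appL N _ ih => exact .appL _ (ih k)
  | appR M _ ih => exact .appR _ (ih k)
  | lamC _ ih => exact .lamC (ih (k + 1))

theorem Red.lift {M M' : Tm} (h : Red M M') (k : ℕ) : Red (Tm.lift M k) (Tm.lift M' k) :=
  ReflTransGen.lift (Tm.lift · k) (fun _ _ s => s.lift k) _ _ h

theorem Step.exists_of_lift {M X : Tm} {k : ℕ} (h : Step (Tm.lift M k) X) :
    ∃ M', X = Tm.lift M' k ∧ Step M M' := by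
  induction M generalizing k X with
  | var n => simp only [Tm.lift] at h; split_ifs at h <;> cases h
  | bot => cases h
  | lam M ih =>
    simp only [Tm.lift] at h
    generalize hB : Tm.lift M (k + 1) = B at h
    cases h with
    | botLam => obtain rfl := lift_eq_bot hB; exact ⟨bot, rfl, .botLam⟩
    | lamC s =>
      obtain ⟨M', rfl, s'⟩ := ih (hB ▸ s)
      exact ⟨.lam M', rfl, .lamC s'⟩
  | app P Q ihP ihQ =>
    simp only [Tm.lift] at h
    generalize hA : Tm.lift P k = A at h
    generalize hB : Tm.lift Q k = B at h
    cases h with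
    | beta C N =>
      obtain ⟨P₀, rfl, rfl⟩ := lift_eq_lam hA
      exact ⟨subst P₀ 0 Q, by rw [lift_subst_of_ge P₀ Q (Nat.zero_le k), hB], .beta _ _⟩
    | botApp => obtain rfl := lift_eq_bot hA; exact ⟨bot, rfl, .botApp Q⟩
    | appL _ s =>
      obtain ⟨P', rfl, s'⟩ := ihP (hA ▸ s)
      exact ⟨.app P' Q, by rw [← hB]; rfl, .appL Q s'⟩
    | appR _ s =>
      obtain ⟨Q', rfl, s'⟩ := ihQ (hB ▸ s)
      exact ⟨.app P Q', by rw [← hA]; rfl, .appR P s'⟩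

theorem Red.exists_of_lift {M X : Tm} {k : ℕ} (h : Red (Tm.lift M k) X) :
    ∃ M', X = Tm.lift M' k ∧ Red M M' := by
  induction h with
  | refl => exact ⟨M, rfl, .refl⟩
  | tail _ s ih =>
    obtain ⟨M', rfl, r⟩ := ih
    obtain ⟨M'', rfl, s'⟩ := Step.exists_of_lift s
    exact ⟨M'', rfl, ReflTransGen.tail r s'⟩

theorem Red.eq_of_normal {N X : Tm} (hN : ∀ Y, ¬ Step N Y) (h : Red N X) : X = N := by
  induction h with
  | refl => rfl
  | tail _ s ih => subst ih; exact absurd s (hN _)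

theorem Conv.red_of_normal {M N : Tm} (h : Conv M N) (hN : ∀ Y, ¬ Step N Y) : Red M N := by
  obtain ⟨P, hM, hNP⟩ := h
  rwa [Red.eq_of_normal hN hNP] at hM

theorem iTm_normal (Y : Tm) : ¬ Step iTm Y := by
  intro h
  cases h with
  | lamC s => cases s

theorem Red.of_lam {P Q : Tm} (h : Red (Tm.lam P) (Tm.lam Q)) : Red P Q := by
  suffices ∀ X, Red (Tm.lam P) X → (∃ P', X = Tm.lam P' ∧ Red P P') ∨ X = bot by
    rcases this _ h with ⟨P', hQ, hP⟩ | h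
    · rwa [lam.inj hQ]
    · cases h
  intro X h
  induction h with
  | refl => exact .inl ⟨P, rfl, .refl⟩
  | tail _ s ih =>
    rcases ih with ⟨P', rfl, r⟩ | rfl
    · cases s with
      | botLam => exact .inr rfl
      | lamC s' => exact .inl ⟨_, rfl, ReflTransGen.tail r s'⟩
    · cases s

end Reduction

section HeadReduction

inductive HStep : Tm → Tm → Prop
  | beta (C B : Tm) : HStep (app (lam C) B) (subst C 0 B)
  | botApp (B : Tm) : HStep (app bot B) bot
  | appL {P P' : Tm} (Q : Tm) : HStep P P' → HStep (app P Q) (app P' Q)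

def HRed : Tm → Tm → Prop := ReflTransGen HStep

theorem HStep.step {M N : Tm} (h : HStep M N) : Step M N := by
  induction h with
  | beta C B => exact .beta C B
  | botApp B => exact .botApp B
  | appL Q _ ih => exact .appL Q ih

theorem HRed.red {M N : Tm} (h : HRed M N) : Red M N :=
  ReflTransGen.mono (fun _ _ s => HStep.step s) _ _ h

theorem HStep.subst {M M' : Tm} (h : HStep M M') (k : ℕ) (N : Tm) :
    HStep (Tm.subst M k N) (Tm.subst M' k N) := by
  induction h with
  | beta C B => rw [subst_subst C B N (Nat.zero_le k)]; exact .beta _ _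
  | botApp B => exact .botApp _
  | appL Q _ ih => exact .appL _ ih

theorem HRed.subst {M M' : Tm} (h : HRed M M') (k : ℕ) (N : Tm) :
    HRed (Tm.subst M k N) (Tm.subst M' k N) :=
  ReflTransGen.lift (Tm.subst · k N) (fun _ _ s => s.subst k N) _ _ h

theorem HStep.lift {M M' : Tm} (h : HStep M M') (k : ℕ) : HStep (Tm.lift M k) (Tm.lift M' k) := by
  induction h with
  | beta C B => rw [lift_subst_of_ge C B (Nat.zero_le k)]; exact .beta _ _
  | botApp B => exact .botApp _
  | appL Q _ ih => exact .appL _ ih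

theorem HRed.lift {M M' : Tm} (h : HRed M M') (k : ℕ) : HRed (Tm.lift M k) (Tm.lift M' k) :=
  ReflTransGen.lift (Tm.lift · k) (fun _ _ s => s.lift k) _ _ h

theorem HRed.appL {M M' : Tm} (h : HRed M M') (N : Tm) : HRed (app M N) (app M' N) :=
  ReflTransGen.lift (Tm.app · N) (fun _ _ s => HStep.appL N s) _ _ h

theorem HRed.eq_bot {X : Tm} (h : HRed bot X) : X = bot := by
  induction h with
  | refl => rfl
  | tail _ s ih => subst ih; cases s

end HeadReduction

section Standardisation

/-- Takahashi's semi-standard reduction: head steps first, then the same recursively inside. -/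
inductive Std : Tm → Tm → Prop
  | var {M : Tm} {n : ℕ} : HRed M (var n) → Std M (var n)
  | bot (M : Tm) : Std M bot
  | lam {M N₀ N : Tm} : HRed M (lam N₀) → Std N₀ N → Std M (lam N)
  | app {M P Q P' Q' : Tm} : HRed M (app P Q) → Std P P' → Std Q Q' → Std M (app P' Q')

theorem Std.refl (M : Tm) : Std M M := by
  induction M with
  | var n => exact .var .refl
  | bot => exact .bot _
  | lam M ih => exact .lam .refl ih
  | app P Q ihP ihQ => exact .app .refl ihP ihQ

theorem Std.of_hRed {M M₁ N : Tm} (h : HRed M M₁) (hs : Std M₁ N) : Std M N := by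
  cases hs with
  | var h' => exact .var (ReflTransGen.trans h h')
  | bot => exact .bot _
  | lam h' s => exact .lam (ReflTransGen.trans h h') s
  | app h' s₁ s₂ => exact .app (ReflTransGen.trans h h') s₁ s₂

theorem Std.lift {M N : Tm} (h : Std M N) (k : ℕ) : Std (Tm.lift M k) (Tm.lift N k) := by
  induction h generalizing k with
  | var h =>
    have := h.lift k
    simp only [Tm.lift] at this ⊢
    split_ifs at this ⊢ <;> exact .var this
  | bot => exact .bot _
  | lam h _ ih => exact .lam (h.lift k) (ih (k + 1))
  | app h _ _ ih₁ ih₂ => exact .app (h.lift k) (ih₁ k) (ih₂ k)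

theorem Std.subst {A A' B B' : Tm} (hA : Std A A') (hB : Std B B') (k : ℕ) :
    Std (Tm.subst A k B) (Tm.subst A' k B') := by
  induction hA generalizing k B B' with
  | var h =>
    have := h.subst k B
    simp only [Tm.subst] at this ⊢
    split_ifs at this ⊢
    · exact .var this
    · exact Std.of_hRed this hB
    · exact .var this
  | bot => exact .bot _
  | lam h _ ih => exact .lam (h.subst k B) (ih (hB.lift 0) (k + 1))
  | app h _ _ ih₁ ih₂ => exact .app (h.subst k B) (ih₁ hB k) (ih₂ hB k)

theorem Std.step {M N N' : Tm} (h : Std M N) (s : Step N N') : Std M N' := by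
  induction h generalizing N' with
  | var _ => cases s
  | bot => cases s
  | lam h _ ih =>
    cases s with
    | botLam => exact .bot _
    | lamC s' => exact .lam h (ih s')
  | @app M P Q P' Q' h sP sQ ihP ihQ =>
    cases s with
    | beta C' _ =>
      obtain ⟨C, hP, hC⟩ : ∃ C, HRed P (Tm.lam C) ∧ Std C C' := by
        cases sP with
        | lam hP hC => exact ⟨_, hP, hC⟩
      have hM : HRed M (Tm.subst C 0 Q) :=
        ReflTransGen.tail (ReflTransGen.trans h (hP.appL Q)) (.beta C Q)
      exact (hC.subst sQ 0).of_hRed hM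
    | botApp => exact .bot _
    | appL _ s' => exact .app h (ihP s') sQ
    | appR _ s' => exact .app h sP (ihQ s')

theorem Std.of_red {M N : Tm} (h : Red M N) : Std M N := by
  induction h with
  | refl => exact .refl M
  | tail _ s ih => exact ih.step s

theorem Red.hRed_of_var {M : Tm} {n : ℕ} (h : Red M (var n)) : HRed M (var n) := by
  cases Std.of_red h with
  | var h' => exact h'

end Standardisation

section Applist

theorem applist_snoc (M N : Tm) (Ms : List Tm) : applist M (Ms ++ [N]) = app (applist M Ms) N :=
  List.foldl_append ..

theorem lift_applist (M : Tm) (Ms : List Tm) (k : ℕ) :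
    lift (applist M Ms) k = applist (lift M k) (Ms.map (lift · k)) := by
  induction Ms generalizing M with
  | nil => rfl
  | cons P Ms ih => exact ih (app M P)

theorem subst_applist (M N : Tm) (Ms : List Tm) (k : ℕ) :
    subst (applist M Ms) k N = applist (subst M k N) (Ms.map (subst · k N)) := by
  induction Ms generalizing M with
  | nil => rfl
  | cons P Ms ih => exact ih (app M P)

theorem lift_eq_applist_var_zero {W : Tm} {Ms : List Tm} {k : ℕ}
    (h : lift W k = applist (var 0) Ms) : ∃ Ms₀, W = applist (var 0) Ms₀ := by
  induction Ms using List.reverseRecOn generalizing W with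
  | nil =>
    change lift W k = var 0 at h
    cases W with
    | var m =>
      simp only [lift] at h
      split_ifs at h
      · exact ⟨[], h⟩
      · cases h
    | bot | lam | app => cases h
  | append_singleton Ms N ih =>
    rw [applist_snoc] at h
    obtain ⟨W₁, W₂, rfl, h₁, -⟩ := lift_eq_app h
    obtain ⟨Ms₀, rfl⟩ := ih h₁.symm
    exact ⟨Ms₀ ++ [W₂], (applist_snoc ..).symm⟩

end Applist

section HeadVariable

theorem HRed.exists_of_app_var {A B : Tm} {n : ℕ} (h : HRed (app A B) (var n)) :
    ∃ C, HRed A (lam C) ∧ HRed (Tm.subst C 0 B) (var n) := by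
  generalize hT : app A B = T at h
  induction h using ReflTransGen.head_induction_on generalizing A with
  | refl => cases hT
  | head s hrest ih =>
    subst hT
    cases s with
    | beta C _ => exact ⟨C, .refl, hrest⟩
    | botApp => cases HRed.eq_bot hrest
    | appL _ s' =>
      obtain ⟨C, h₁, h₂⟩ := ih rfl
      exact ⟨C, ReflTransGen.head s' h₁, h₂⟩

/-- Since `B` is neither an abstraction nor `⊥`, putting it in head position creates no redex. -/
theorem HStep.of_subst_zero {B C X : Tm} (hB : ∀ E, B ≠ lam E) (hB' : B ≠ bot)
    (h : HStep (Tm.subst C 0 B) X) :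
    (∃ Ms, C = applist (var 0) Ms) ∨ ∃ C', HStep C C' ∧ X = Tm.subst C' 0 B := by
  induction C generalizing X with
  | var n =>
    cases n with
    | zero => exact .inl ⟨[], rfl⟩
    | succ n => simp only [Tm.subst] at h; cases h
  | bot => cases h
  | lam => cases h
  | app C₁ C₂ ih₁ _ =>
    simp only [Tm.subst] at h
    generalize hU : Tm.subst C₁ 0 B = U at h
    cases h with
    | beta E _ =>
      rcases subst_eq_lam hU with ⟨E₀, rfl, rfl⟩ | ⟨-, rfl⟩
      · exact .inr ⟨Tm.subst E₀ 0 C₂, .beta E₀ C₂, (subst_subst E₀ C₂ B le_rfl).symm⟩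
      · exact absurd rfl (hB E)
    | botApp =>
      rcases subst_eq_bot hU with rfl | ⟨-, rfl⟩
      · exact .inr ⟨bot, .botApp C₂, rfl⟩
      · exact absurd rfl hB'
    | appL _ s =>
      rcases ih₁ (hU ▸ s) with ⟨Ms, rfl⟩ | ⟨C₁', s', rfl⟩
      · exact .inl ⟨Ms ++ [C₂], (applist_snoc ..).symm⟩
      · exact .inr ⟨app C₁' C₂, .appL C₂ s', rfl⟩

theorem HRed.of_subst_zero_var {B C : Tm} {n : ℕ} (hB : ∀ E, B ≠ lam E) (hB' : B ≠ bot)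
    (h : HRed (Tm.subst C 0 B) (var n)) :
    (∃ Ms, HRed C (applist (var 0) Ms)) ∨ HRed C (var (n + 1)) := by
  generalize hT : Tm.subst C 0 B = T at h
  induction h using ReflTransGen.head_induction_on generalizing C with
  | refl =>
    cases C with
    | var m =>
      cases m with
      | zero => exact .inl ⟨[], .refl⟩
      | succ m =>
        obtain rfl : m = n := by simpa [Tm.subst] using hT
        exact .inr .refl
    | bot | lam | app => cases hT
  | head s _ ih =>
    subst hT
    rcases HStep.of_subst_zero hB hB' s with ⟨Ms, rfl⟩ | ⟨C', s', rfl⟩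
    · exact .inl ⟨Ms, .refl⟩
    · rcases ih rfl with ⟨Ms, h'⟩ | h'
      · exact .inl ⟨Ms, ReflTransGen.head s' h'⟩
      · exact .inr (ReflTransGen.head s' h')

end HeadVariable

theorem exists_red_lam_applist_of_conv_comp {M R : Tm} (h : Conv (comp M R) iTm) :
    ∃ Ms, Red M (lam (applist (var 0) Ms)) := by
  have hbody : HRed (app (lift M 0) (app (lift R 0) (var 0))) (var 0) :=
    (Red.of_lam (h.red_of_normal iTm_normal)).hRed_of_var
  obtain ⟨C, hMC, hC⟩ := hbody.exists_of_app_var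
  obtain ⟨M', hM', hMM'⟩ := hMC.red.exists_of_lift
  obtain ⟨C₀, rfl, rfl⟩ := lift_eq_lam hM'.symm
  rcases hC.of_subst_zero_var (fun _ => by simp) (by simp) with ⟨Ms, hC₀⟩ | hC₀
  · obtain ⟨W, hW, hC₀W⟩ := hC₀.red.exists_of_lift
    obtain ⟨Ms₀, rfl⟩ := lift_eq_applist_var_zero hW.symm
    exact ⟨Ms₀, ReflTransGen.trans hMM' hC₀W.lam⟩
  · obtain ⟨W, hW, -⟩ := hC₀.red.exists_of_lift
    exact absurd hW.symm (lift_ne_var_self W 1)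

section Selector

theorem lift_iterLam (n : ℕ) (X : Tm) (k : ℕ) :
    lift (iterLam n X) k = iterLam n (lift X (k + n)) := by
  induction n generalizing k with
  | zero => rfl
  | succ n ih => simp only [iterLam, lift, ih, Nat.add_right_comm k 1 n, Nat.add_assoc]

theorem lift_sel (m k : ℕ) : lift (sel m) k = sel m := by
  simp only [sel, lift_iterLam, lift, if_pos (by omega : m < k + (m + 1))]

theorem subst_iterLam_var_self (m j : ℕ) :
    subst (iterLam m (var (m + j))) j (var j) = iterLam m (var (m + j)) := by
  induction m generalizing j with
  | zero => simp [iterLam, subst]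
  | succ m ih =>
    show lam (subst (iterLam m (var (m + 1 + j))) (j + 1) (lift (var j) 0)) = _
    rw [Nat.add_right_comm, Nat.add_assoc]
    exact congrArg lam (ih (j + 1))

theorem subst_iterLam_var_of_le (m : ℕ) {i j : ℕ} (h : j ≤ i) (N : Tm) :
    subst (iterLam m (var (m + i + 1))) j N = iterLam m (var (m + i)) := by
  induction m generalizing i j N with
  | zero => simp only [iterLam, subst]; split_ifs <;> first | omega | rfl
  | succ m ih =>
    show lam (subst (iterLam m (var (m + 1 + i + 1))) (j + 1) (lift N 0)) =
      lam (iterLam m (var (m + 1 + i)))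
    rw [Nat.add_right_comm m 1 i, Nat.add_assoc m i 1, ih (Nat.succ_le_succ h)]

theorem red_applist_iterLam_var (k : ℕ) (Ns : List Tm) :
    Red (applist (iterLam Ns.length (var (Ns.length + k))) Ns) (var k) := by
  induction Ns with
  | nil => rw [List.length_nil, Nat.zero_add]; exact ReflTransGen.refl
  | cons N Ns ih =>
    have hβ := Step.beta (iterLam Ns.length (var (Ns.length + k + 1))) N
    rw [subst_iterLam_var_of_le _ (Nat.zero_le k)] at hβ
    rw [List.length_cons, Nat.add_right_comm]
    exact ReflTransGen.trans (Red.applist (ReflTransGen.single hβ) Ns) ih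

theorem conv_comp_sel {M : Tm} {Ms : List Tm} (h : Red M (lam (applist (var 0) Ms))) :
    Conv (comp M (sel Ms.length)) iTm := by
  refine ⟨iTm, ?_, .refl⟩
  set Z := app (sel Ms.length) (var 0)
  set Ms' := Ms.map (lift · 1)
  set Ns := Ms'.map (subst · 0 Z)
  have hM : Red (lift M 0) (lam (applist (var 0) Ms')) := by
    simpa only [lift, lift_applist, if_pos Nat.one_pos] using h.lift 0
  have hβ : Step (app (lam (applist (var 0) Ms')) Z) (applist Z Ns) := by
    have := Step.beta (applist (var 0) Ms') Z
    rwa [subst_applist] at this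
  have hZ : Step Z (iterLam Ms.length (var Ms.length)) := by
    have hsubst : subst (iterLam Ms.length (var Ms.length)) 0 (var 0) =
        iterLam Ms.length (var Ms.length) := subst_iterLam_var_self Ms.length 0
    exact hsubst ▸ Step.beta _ _
  have hNs : Red (applist (iterLam Ms.length (var Ms.length)) Ns) (var 0) := by
    simpa [Ns, Ms'] using red_applist_iterLam_var 0 Ns
  show Red (lam (app (lift M 0) (app (lift (sel Ms.length) 0) (var 0)))) (lam (var 0))
  rw [lift_sel]
  exact Red.lam <| (hM.app .refl).trans <| ReflTransGen.head hβ <|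
    (Red.applist (ReflTransGen.single hZ) Ns).trans hNs

end Selector

end Tm

/-- a λ⊥-term has a right inverse iff it reduces to a hnf λz.zM₁…Mₘ. -/
theorem right_invertible_iff (M : Tm) :
    (∃ R, Tm.Conv (Tm.comp M R) Tm.iTm) ↔
      ∃ Ms : List Tm, Tm.Red M (Tm.lam (Tm.applist (Tm.var 0) Ms)) :=
  ⟨fun ⟨_, h⟩ => Tm.exists_red_lam_applist_of_conv_comp h,
    fun ⟨_, h⟩ => ⟨_, Tm.conv_comp_sel h⟩⟩
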